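/- arXiv:1912.01388 — 5 statements merged into one kernel-verified Lean document; each statement's English description precedes it below -/
import Mathlib

section
/- Let X be a real-valued random variable and U a random variable uniformly distributed on [0,1] and independent of X. Then the distributional transform T_X(X,U) is uniformly distributed on [0,1], i.e., the pushforward of the law of (X,U) under the map (x,u) ↦ P(X < x) + u·P(X = x) is the uniform distribution (Lebesgue measure restricted to [0,1]). -/
open MeasureTheory ProbabilityTheory Set Filter

/-- The distributional transform kernel `T_X(x,u) = P(X < x) + u * P(X = x)`. -/
noncomputable def distTransform {Ω : Type*} [MeasurableSpace Ω] (P : Measure Ω)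
    (X : Ω → ℝ) (x u : ℝ) : ℝ :=
  (P {ω | X ω < x}).toReal + u * (P {ω | X ω = x}).toReal

/-!
Only the law `μ` of `X` matters, and by independence `(X, U)` has law `μ ⊗ Unif[0,1]`.
Fix `t` and let `q` be the smallest point with `F q ≥ t`, `F` the cdf of `μ`. For `u ∈ [0,1]`
the value `T(x,u)` lies between `F(x-)` and `F x`, so `T(x,u) < t` holds for every `x < q`,
for no `x > q`, and for `x = q` exactly when `u * μ{q} < t - F(q-)`. Hence
`P(T < t) = F(q-) + (t - F(q-)) = t`; the degenerate cases `t ≤ 0` and `t > F` everywhere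
give `0` and `1`.
-/

lemma StieltjesFunction.le_apply_csInf (f : StieltjesFunction ℝ) {t : ℝ}
    (hne : {x | t ≤ f x}.Nonempty) :
    t ≤ f (sInf {x | t ≤ f x}) := by
  refine ge_of_tendsto ((f.right_continuous _).mono Ioi_subset_Ici_self).tendsto ?_
  filter_upwards [self_mem_nhdsWithin] with y hy
  obtain ⟨a, ha, hay⟩ := exists_lt_of_csInf_lt hne hy
  exact ha.trans (f.mono hay.le)

instance : IsProbabilityMeasure (volume.restrict (Icc (0 : ℝ) 1)) :=
  ⟨by rw [Measure.restrict_apply_univ, Real.volume_Icc, sub_zero, ENNReal.ofReal_one]⟩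

lemma volume_restrict_Icc_zero_one_Iio (t : ℝ) :
    volume.restrict (Icc (0 : ℝ) 1) (Iio t) = ENNReal.ofReal (min t 1) := by
  rw [measure_congr Iio_ae_eq_Iic, Measure.restrict_apply measurableSet_Iic, inter_comm,
    ← Ici_inter_Iic, inter_assoc, Iic_inter_Iic, Ici_inter_Iic, Real.volume_Icc, sub_zero,
    inf_comm]

lemma volume_restrict_Icc_zero_one_setOf_mul_lt {p c : ℝ} (hc : 0 ≤ c) (hcp : c ≤ p) :
    ENNReal.ofReal p * volume.restrict (Icc (0 : ℝ) 1) {u | u * p < c} = ENNReal.ofReal c := by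
  rcases hc.trans hcp |>.eq_or_lt with hp | hp
  · obtain rfl : c = 0 := le_antisymm (hp ▸ hcp) hc
    simp [← hp]
  have hset : {u | u * p < c} = Iio (c / p) := by
    ext u; exact (lt_div_iff₀ hp).symm
  rw [hset, volume_restrict_Icc_zero_one_Iio, min_eq_left ((div_le_one hp).2 hcp),
    ← ENNReal.ofReal_mul hp.le, mul_div_cancel₀ _ hp.ne']

lemma distTransform_id_apply (μ : Measure ℝ) (x u : ℝ) :
    distTransform μ id x u = μ.real (Iio x) + u * μ.real {x} := rfl

lemma distTransform_eq_distTransform_map {Ω : Type*} [MeasurableSpace Ω] (P : Measure Ω)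
    {X : Ω → ℝ} (hX : Measurable X) : distTransform P X = distTransform (P.map X) id := by
  ext x u
  rw [distTransform_id_apply, map_measureReal_apply hX measurableSet_Iio,
    map_measureReal_apply hX (measurableSet_singleton x)]
  rfl

section

variable (μ : Measure ℝ) [IsProbabilityMeasure μ]

lemma cdf_eq_measureReal_Iio_add_singleton (x : ℝ) :
    cdf μ x = μ.real (Iio x) + μ.real {x} := by
  rw [cdf_eq_real, ← Iio_union_right, measureReal_union (by simp) (measurableSet_singleton x)]

lemma measureReal_Iio_le_of_forall_lt_cdf {q t : ℝ} (h : ∀ x < q, cdf μ x < t) :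
    μ.real (Iio q) ≤ t := by
  have hIio := (cdf μ).measure_Iio (tendsto_cdf_atBot μ) q
  rw [measure_cdf, sub_zero] at hIio
  have hnonneg : 0 ≤ Function.leftLim (cdf μ) q :=
    (cdf_nonneg μ (q - 1)).trans ((cdf μ).mono.le_leftLim (sub_one_lt q))
  rw [measureReal_def, hIio, ENNReal.toReal_ofReal hnonneg]
  exact le_of_tendsto ((cdf μ).mono.tendsto_leftLim q)
    (eventually_nhdsWithin_of_forall fun x hx => (h x hx).le)

lemma measurable_distTransform_id :
    Measurable (fun z : ℝ × ℝ => distTransform μ id z.1 z.2) := by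
  have hIio : Monotone fun x => μ.real (Iio x) := fun _ _ hab =>
    measureReal_mono (Iio_subset_Iio hab)
  have hsingleton : (fun x => μ.real {x}) = fun x => cdf μ x - μ.real (Iio x) := by
    ext x; rw [cdf_eq_measureReal_Iio_add_singleton]; ring
  have hsingleton_meas : Measurable fun x => μ.real {x} :=
    hsingleton ▸ (cdf μ).mono.measurable.sub hIio.measurable
  exact (hIio.measurable.comp measurable_fst).add
    (measurable_snd.mul (hsingleton_meas.comp measurable_fst))

lemma distTransform_id_mem_Icc {x u : ℝ} (hu : u ∈ Icc 0 1) :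
    distTransform μ id x u ∈ Icc (μ.real (Iio x)) (cdf μ x) := by
  rw [distTransform_id_apply, cdf_eq_measureReal_Iio_add_singleton]
  have h := measureReal_nonneg (μ := μ) (s := {x})
  constructor
  · nlinarith [hu.1]
  · nlinarith [hu.2]

lemma distTransform_id_lt_iff {t q x u : ℝ} (hu : u ∈ Icc 0 1) (hlt : ∀ x < q, cdf μ x < t)
    (hq : t ≤ cdf μ q) :
    distTransform μ id x u < t ↔ x < q ∨ x = q ∧ u * μ.real {q} < t - μ.real (Iio q) := by
  rcases lt_trichotomy x q with hxq | rfl | hqx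
  · exact iff_of_true ((distTransform_id_mem_Icc μ hu).2.trans_lt (hlt x hxq)) (Or.inl hxq)
  · rw [distTransform_id_apply]
    simp only [lt_irrefl, true_and, false_or]
    constructor <;> intro <;> linarith
  · refine iff_of_false (not_lt.2 ?_) (by rintro (h | ⟨rfl, -⟩) <;> linarith)
    calc t ≤ cdf μ q := hq
      _ = μ.real (Iic q) := cdf_eq_real μ q
      _ ≤ μ.real (Iio x) := measureReal_mono (Iic_subset_Iio.2 hqx)
      _ ≤ distTransform μ id x u := (distTransform_id_mem_Icc μ hu).1

lemma ae_snd_mem_Icc_prod_volume_restrict :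
    ∀ᵐ z ∂μ.prod (volume.restrict (Icc (0 : ℝ) 1)), z.2 ∈ Icc 0 1 := by
  refine ae_of_ae_map measurable_snd.aemeasurable ?_
  rw [← Measure.snd, Measure.snd_prod]
  exact ae_restrict_mem measurableSet_Icc

lemma prod_distTransform_id_lt_eq_ofReal {t q : ℝ} (hlt : ∀ x < q, cdf μ x < t)
    (hq : t ≤ cdf μ q) :
    μ.prod (volume.restrict (Icc (0 : ℝ) 1)) {z | distTransform μ id z.1 z.2 < t}
      = ENNReal.ofReal t := by
  set c := t - μ.real (Iio q)
  have hc : 0 ≤ c := sub_nonneg.2 (measureReal_Iio_le_of_forall_lt_cdf μ hlt)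
  have hcq : c ≤ μ.real {q} := by
    have := cdf_eq_measureReal_Iio_add_singleton μ q
    simp only [c]; linarith
  have hset : {z : ℝ × ℝ | distTransform μ id z.1 z.2 < t}
      =ᵐ[μ.prod (volume.restrict (Icc (0 : ℝ) 1))]
        (Iio q ×ˢ univ ∪ {q} ×ˢ {u | u * μ.real {q} < c} : Set (ℝ × ℝ)) := by
    refine eventuallyEq_set.2 ?_
    filter_upwards [ae_snd_mem_Icc_prod_volume_restrict μ] with z hz
    simpa [c] using distTransform_id_lt_iff μ hz hlt hq
  have hdisj : Disjoint (Iio q ×ˢ (univ : Set ℝ)) ({q} ×ˢ {u | u * μ.real {q} < c}) :=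
    disjoint_prod.2 (Or.inl (by simp))
  rw [measure_congr hset, measure_union hdisj
      ((measurableSet_singleton q).prod (measurableSet_lt (by fun_prop) measurable_const)),
    Measure.prod_prod, Measure.prod_prod, measure_univ, mul_one, ← ofReal_measureReal,
    ← ofReal_measureReal, volume_restrict_Icc_zero_one_setOf_mul_lt hc hcq,
    ← ENNReal.ofReal_add measureReal_nonneg hc, add_sub_cancel]

lemma prod_distTransform_id_lt (t : ℝ) :
    μ.prod (volume.restrict (Icc (0 : ℝ) 1)) {z | distTransform μ id z.1 z.2 < t}
      = volume.restrict (Icc (0 : ℝ) 1) (Iio t) := by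
  rw [volume_restrict_Icc_zero_one_Iio]
  rcases le_or_gt t 0 with ht | ht
  · rw [ENNReal.ofReal_eq_zero.2 ((min_le_left t 1).trans ht), measure_eq_zero_iff_ae_notMem]
    filter_upwards [ae_snd_mem_Icc_prod_volume_restrict μ] with z hz
    exact not_lt.2 (ht.trans (measureReal_nonneg.trans (distTransform_id_mem_Icc μ hz).1))
  by_cases hA : {x | t ≤ cdf μ x}.Nonempty
  · obtain ⟨x₀, hx₀⟩ := ((tendsto_cdf_atBot μ).eventually (eventually_lt_nhds ht)).exists
    have hbdd : BddBelow {x | t ≤ cdf μ x} :=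
      ⟨x₀, fun x hx => le_of_not_gt fun hxx₀ => (hx.trans ((cdf μ).mono hxx₀.le)).not_gt hx₀⟩
    have hq := (cdf μ).le_apply_csInf hA
    rw [prod_distTransform_id_lt_eq_ofReal μ
      (fun x hx => lt_of_not_ge fun h => notMem_of_lt_csInf hx hbdd h) hq,
      min_eq_left (hq.trans (cdf_le_one μ _))]
  · rw [not_nonempty_iff_eq_empty, eq_empty_iff_forall_notMem] at hA
    have ht1 : 1 ≤ t := le_of_tendsto' (tendsto_cdf_atTop μ) fun x => le_of_not_ge (hA x)
    rw [min_eq_right ht1, ENNReal.ofReal_one,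
      ← prob_compl_eq_zero_iff (measurableSet_lt (measurable_distTransform_id μ) measurable_const),
      measure_eq_zero_iff_ae_notMem]
    filter_upwards [ae_snd_mem_Icc_prod_volume_restrict μ] with z hz
    simpa using (distTransform_id_mem_Icc μ hz).2.trans_lt (lt_of_not_ge (hA z.1))

theorem map_prod_distTransform_id :
    (μ.prod (volume.restrict (Icc (0 : ℝ) 1))).map
        (fun z : ℝ × ℝ => distTransform μ id z.1 z.2) = volume.restrict (Icc (0 : ℝ) 1) := by
  have := Measure.isProbabilityMeasure_map (μ := μ.prod (volume.restrict (Icc (0 : ℝ) 1)))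
    (measurable_distTransform_id μ).aemeasurable
  refine Measure.ext_of_Ici _ _ fun t => ?_
  rw [← compl_Iio, prob_compl_eq_one_sub measurableSet_Iio,
    prob_compl_eq_one_sub measurableSet_Iio,
    Measure.map_apply (measurable_distTransform_id μ) measurableSet_Iio]
  exact congrArg (1 - ·) (prod_distTransform_id_lt μ t)

end

/-- If `U` is uniformly distributed on `[0,1]` and independent of `X`,
then the distributional transform `T_X(X,U)` is uniformly distributed on `[0,1]`. -/
theorem distTransform_uniform {Ω : Type*} [MeasurableSpace Ω]
    (P : Measure Ω) [IsProbabilityMeasure P] (X U : Ω → ℝ)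
    (hX : Measurable X) (hU : Measurable U)
    (hUunif : Measure.map U P = volume.restrict (Icc (0:ℝ) 1))
    (hXU : IndepFun X U P) :
    Measure.map (fun ω => distTransform P X (X ω) (U ω)) P
      = volume.restrict (Icc (0:ℝ) 1) := by
  have := Measure.isProbabilityMeasure_map (μ := P) hX.aemeasurable
  set T := fun z : ℝ × ℝ => distTransform (P.map X) id z.1 z.2
  calc P.map (fun ω => distTransform P X (X ω) (U ω))
      = (P.map fun ω => (X ω, U ω)).map T := by
        rw [Measure.map_map (measurable_distTransform_id _) (hX.prodMk hU),
          distTransform_eq_distTransform_map P hX]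
        rfl
    _ = ((P.map X).prod (P.map U)).map T := by
        rw [(indepFun_iff_map_prod_eq_prod_map_map hX.aemeasurable hU.aemeasurable).1 hXU]
    _ = volume.restrict (Icc (0:ℝ) 1) := by
        rw [hUunif, map_prod_distTransform_id]
end

section
/- Let X be a real-valued random variable with distribution function F_X(x) := P(X ≤ x), and let U be uniformly distributed on [0,1] and independent of X. Then X = F_X^{-1}(T_X(X,U)) almost surely, where F_X^{-1}(p) := inf{x ∈ ℝ : F_X(x) ≥ p} is the generalized inverse (quantile function) of F_X. -/
/-!
Let `μ` be the law of `X` and `T = T_X(x, u)` with `u ∈ (0, 1]`. Since `u ≤ 1`, `T ≤ F_X(x)`;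
and for `y < x`, `T - F_X(y) ≥ u · μ (y, x]`, which is positive unless `μ` vanishes on `(y, x]`.
So `x` is the least point where `F_X` reaches `T` as soon as `μ (y, x] > 0` for all `y < x`, and
`μ`-almost every `x` has this property: among the points `x` with some null interval `(y, x]`,
countably many of these intervals cover all but the points isolated on the left in the remainder
(Lindelöf), and the isolated points are countable, each lying in its own null interval.
-/

open MeasureTheory ProbabilityTheory Set Filter

open Topology

theorem ae_forall_lt_measure_Ioc_ne_zero {α : Type*} [LinearOrder α] [TopologicalSpace α]
    [OrderTopology α] [SecondCountableTopology α] [MeasurableSpace α] (μ : Measure α) :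
    ∀ᵐ x ∂μ, ∀ y < x, μ (Ioc y x) ≠ 0 := by
  set s := {x | ∃ y < x, μ (Ioc y x) = 0}
  suffices μ s = 0 by
    filter_upwards [measure_eq_zero_iff_ae_notMem.1 this] with x hx y hy h0 using hx ⟨y, hy, h0⟩
  choose! y hy hμy using fun x (hx : x ∈ s) => hx
  obtain ⟨T, hTs, hTc, hTU⟩ :=
    TopologicalSpace.isOpen_biUnion_countable s (fun x => Ioo (y x) x) fun _ _ => isOpen_Ioo
  set U := ⋃ x ∈ s, Ioo (y x) x
  have hleft : s \ U ⊆ {x ∈ s \ U | 𝓝[(s \ U) ∩ Iio x] x = ⊥} := by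
    intro x hx
    refine ⟨hx, empty_mem_iff_bot.1 ?_⟩
    have hIoo : Ioo (y x) x ∈ 𝓝[(s \ U) ∩ Iio x] x :=
      nhdsWithin_mono _ inter_subset_right (Ioo_mem_nhdsLT (hy x hx.1))
    filter_upwards [hIoo, self_mem_nhdsWithin] with z hz hzs
    exact hzs.1.2 (mem_biUnion hx.1 hz)
  have hcover : s ⊆ ⋃ x ∈ T ∪ (s \ U), Ioc (y x) x := by
    intro x hx
    by_cases hxU : x ∈ U
    · rw [← hTU] at hxU
      obtain ⟨z, hzT, hz⟩ := mem_iUnion₂.1 hxU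
      exact mem_biUnion (Or.inl hzT) (Ioo_subset_Ioc_self hz)
    · exact mem_biUnion (Or.inr ⟨hx, hxU⟩) ⟨hy x hx, le_rfl⟩
  refine measure_mono_null hcover ((measure_biUnion_null_iff ?_).2 fun x hx => hμy x ?_)
  · exact hTc.union (countable_setOfPred_isolated_left_within.mono hleft)
  · exact hx.elim (fun h => hTs h) (fun h => h.1)

theorem isLeast_setOf_le_measureReal_Iic {μ : Measure ℝ} [IsFiniteMeasure μ] {x u : ℝ}
    (hx : ∀ y < x, μ (Ioc y x) ≠ 0) (hu : u ∈ Ioc 0 1) :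
    IsLeast {z | μ.real (Iio x) + u * μ.real {x} ≤ μ.real (Iic z)} x := by
  refine ⟨?_, fun z hz => ?_⟩
  · calc μ.real (Iio x) + u * μ.real {x} ≤ μ.real (Iio x) + μ.real {x} := by
          gcongr; exact mul_le_of_le_one_left measureReal_nonneg hu.2
      _ = μ.real (Iic x) := by
          rw [← measureReal_union (by simp) (measurableSet_singleton x), Iio_union_right]
  by_contra! hzx
  have hIio : μ.real (Iic z) + μ.real (Ioo z x) = μ.real (Iio x) := by
    rw [← measureReal_union ((Iic_disjoint_Ioi le_rfl).mono_right Ioo_subset_Ioi_self)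
      measurableSet_Ioo, Iic_union_Ioo_eq_Iio hzx]
  have hIoc : μ.real {x} + μ.real (Ioo z x) = μ.real (Ioc z x) := by
    rw [← measureReal_union (by simp) measurableSet_Ioo, ← insert_eq, Ioo_insert_right hzx]
  have hpos : 0 < μ.real (Ioc z x) :=
    measureReal_nonneg.lt_of_ne' ((measureReal_ne_zero_iff).2 (hx z hzx))
  nlinarith [mul_nonneg (sub_nonneg.2 hu.2) (measureReal_nonneg (μ := μ) (s := Ioo z x)),
    mul_pos hu.1 hpos, hz.out]

theorem distTransform_eq_map {Ω : Type*} [MeasurableSpace Ω] (P : Measure Ω) {X : Ω → ℝ}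
    (hX : Measurable X) (x u : ℝ) :
    distTransform P X x u = (P.map X).real (Iio x) + u * (P.map X).real {x} := by
  rw [distTransform, measureReal_def, measureReal_def, Measure.map_apply hX measurableSet_Iio,
    Measure.map_apply hX (measurableSet_singleton x)]
  rfl

theorem distTransform_quantile_inverse_general {Ω : Type*} [MeasurableSpace Ω]
    (P : Measure Ω) [IsProbabilityMeasure P] (X U : Ω → ℝ)
    (hX : Measurable X) (hU : Measurable U)
    (hUunif : Measure.map U P = volume.restrict (Icc (0:ℝ) 1)) :
    ∀ᵐ ω ∂P, X ω =
      sInf {x : ℝ | distTransform P X (X ω) (U ω) ≤ (P {ω' | X ω' ≤ x}).toReal} := by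
  have hU_mem : ∀ᵐ ω ∂P, U ω ∈ Ioc (0 : ℝ) 1 := by
    refine ae_of_ae_map hU.aemeasurable ?_
    rw [hUunif]
    filter_upwards [ae_restrict_mem measurableSet_Icc, ae_restrict_of_ae (volume.ae_ne 0)]
      with u hu hu0 using ⟨hu.1.lt_of_ne' hu0, hu.2⟩
  filter_upwards [ae_of_ae_map hX.aemeasurable (ae_forall_lt_measure_Ioc_ne_zero (P.map X)),
    hU_mem] with ω hXω hUω
  have hcdf (z : ℝ) : (P {ω' | X ω' ≤ z}).toReal = (P.map X).real (Iic z) := by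
    rw [measureReal_def, Measure.map_apply hX measurableSet_Iic]
    rfl
  simp_rw [hcdf, distTransform_eq_map P hX]
  exact (isLeast_setOf_le_measureReal_Iic hXω hUω).csInf_eq.symm

/-- With `F_X(x) = P(X ≤ x)` and `F_X⁻¹(p) = inf {x | F_X(x) ≥ p}`
(the generalized inverse), if `U` is uniform on `[0,1]` and independent of `X`
then `X = F_X⁻¹(T_X(X,U))` almost surely. -/
theorem distTransform_quantile_inverse {Ω : Type*} [MeasurableSpace Ω]
    (P : Measure Ω) [IsProbabilityMeasure P] (X U : Ω → ℝ)
    (hX : Measurable X) (hU : Measurable U)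
    (hUunif : Measure.map U P = volume.restrict (Icc (0:ℝ) 1))
    (hXU : IndepFun X U P) :
    ∀ᵐ ω ∂P, X ω =
      sInf {x : ℝ | distTransform P X (X ω) (U ω) ≤ (P {ω' | X ω' ≤ x}).toReal} :=
  distTransform_quantile_inverse_general P X U hX hU hUunif
end

section
/- Let X_1,…,X_n be real-valued random variables on a common probability space and let U_1,…,U_n be i.i.d. uniform on [0,1], independent of (X_1,…,X_n). Define C(v_1,…,v_n) := P(T_{X_1}(X_1,U_1) ≤ v_1, …, T_{X_n}(X_n,U_n) ≤ v_n), the joint distribution function of the distributional transforms. Then C is a copula for (X_1,…,X_n), i.e., for all x_1,…,x_n ∈ ℝ: P(X_1 ≤ x_1, …, X_n ≤ x_n) = C(F_{X_1}(x_1), …, F_{X_n}(x_n)), where F_{X_i}(x) := P(X_i ≤ x). In other words, X_1,…,X_n and their distributional transforms have the same copula. -/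
/-!
Almost surely, `X_i ≤ x_i` holds iff `T_{X_i}(X_i, U_i) ≤ F_{X_i}(x_i)`, so the two events
defining the two joint distribution functions differ by a null set. Since `U ≤ 1` a.s., the
transform satisfies `T_X(X, U) ≤ F_X(X)`, which gives one implication by monotonicity of `F_X`.
Conversely, if `X > x` but `T_X(X, U) ≤ F_X(x)` with `U > 0`, then `X` puts no mass on
`(x, X]`; and the event that `X` lands to the right of `x` in a null interval `(x, X]` is null.
-/

open MeasureTheory ProbabilityTheory Set Filter

section

variable {Ω : Type*} [MeasurableSpace Ω] (P : Measure Ω)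

lemma measure_setOf_null_Ioc_eq_zero (X : Ω → ℝ) (x : ℝ) :
    P {ω | x < X ω ∧ P {ω' | x < X ω' ∧ X ω' ≤ X ω} = 0} = 0 := by
  by_cases hmax : ∃ m, x < m ∧ P {ω' | x < X ω' ∧ X ω' ≤ m} = 0 ∧
      ∀ z, x < z → P {ω' | x < X ω' ∧ X ω' ≤ z} = 0 → z ≤ m
  · obtain ⟨m, -, hm, hle⟩ := hmax
    refine measure_mono_null (fun ω hω ↦ ?_) hm
    exact ⟨hω.1, hle _ hω.1 hω.2⟩
  · -- Without a largest null interval `(x, m]`, each null `(x, X ω]` sits in a null `(x, q]`, `q ∈ ℚ`.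
    push Not at hmax
    let Q := {q : ℚ // P {ω' | x < X ω' ∧ X ω' ≤ q} = 0}
    refine measure_mono_null (t := ⋃ q : Q, {ω | x < X ω ∧ X ω ≤ q}) ?_
      (measure_iUnion_null fun q ↦ q.2)
    rintro ω ⟨hx, hω⟩
    obtain ⟨z, -, hz, hlt⟩ := hmax _ hx hω
    obtain ⟨q, hωq, hqz⟩ := exists_rat_btwn hlt
    have hq : P {ω' | x < X ω' ∧ X ω' ≤ q} = 0 := by
      refine measure_mono_null (fun ω' h ↦ ?_) hz
      exact ⟨h.1, h.2.trans hqz.le⟩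
    exact mem_iUnion.2 ⟨⟨q, hq⟩, hx, hωq.le⟩

variable [IsFiniteMeasure P] {X : Ω → ℝ}

lemma measureReal_le_eq_lt_add_eq (hX : Measurable X) (y : ℝ) :
    P.real {ω | X ω ≤ y} = P.real {ω | X ω < y} + P.real {ω | X ω = y} := by
  have hunion : {ω | X ω ≤ y} = {ω | X ω < y} ∪ {ω | X ω = y} := by
    ext ω; simp [le_iff_lt_or_eq]
  rw [hunion, measureReal_union _ (measurableSet_eq_fun hX measurable_const)]
  exact disjoint_left.2 fun ω h₁ h₂ ↦ h₁.ne h₂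

lemma distTransform_le_cdf (hX : Measurable X) {y u : ℝ} (hu : u ≤ 1) :
    distTransform P X y u ≤ P.real {ω | X ω ≤ y} := by
  have hp : 0 ≤ P.real {ω | X ω = y} := measureReal_nonneg
  rw [measureReal_le_eq_lt_add_eq P hX]
  simp only [distTransform, ← measureReal_def]
  nlinarith

lemma measure_Ioc_eq_zero_of_distTransform_le_cdf (hX : Measurable X) {a y u : ℝ}
    (hay : a < y) (hu : 0 < u) (hT : distTransform P X y u ≤ P.real {ω | X ω ≤ a}) :
    P {ω | a < X ω ∧ X ω ≤ y} = 0 := by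
  have hp : 0 ≤ P.real {ω | X ω = y} := measureReal_nonneg
  have hlt : P.real {ω | X ω ≤ a} ≤ P.real {ω | X ω < y} :=
    measureReal_mono fun ω h ↦ lt_of_le_of_lt h hay
  have hdiff : {ω | a < X ω ∧ X ω ≤ y} = {ω | X ω ≤ y} \ {ω | X ω ≤ a} := by
    ext ω; simp [and_comm]
  have hle := measureReal_le_eq_lt_add_eq P hX y
  simp only [distTransform, ← measureReal_def] at hT
  rw [← measureReal_eq_zero_iff, hdiff,
    measureReal_sdiff (s₁ := {ω | X ω ≤ y}) (s₂ := {ω | X ω ≤ a}) (fun ω h ↦ le_trans h hay.le)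
      (measurableSet_le hX measurable_const)]
  have hatom : P.real {ω | X ω = y} = 0 :=
    le_antisymm (nonpos_of_mul_nonpos_right (by linarith) hu) hp
  rw [hatom, mul_zero, add_zero] at hT
  linarith

lemma ae_le_iff_distTransform_le_cdf (hX : Measurable X) {U : Ω → ℝ}
    (hU : ∀ᵐ ω ∂P, U ω ∈ Ioc 0 1) (a : ℝ) :
    ∀ᵐ ω ∂P, X ω ≤ a ↔ distTransform P X (X ω) (U ω) ≤ P.real {ω' | X ω' ≤ a} := by
  have hflat := measure_eq_zero_iff_ae_notMem.1 (measure_setOf_null_Ioc_eq_zero P X a)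
  filter_upwards [hU, hflat] with ω ⟨hu₀, hu₁⟩ hω
  refine ⟨fun hXa ↦ (distTransform_le_cdf P hX hu₁).trans
    (measureReal_mono fun ω' h ↦ h.trans hXa), fun hT ↦ ?_⟩
  by_contra! haX
  exact hω ⟨haX, measure_Ioc_eq_zero_of_distTransform_le_cdf P hX haX hu₀ hT⟩

end

lemma ae_mem_Ioc_of_map_eq_uniform {Ω : Type*} [MeasurableSpace Ω] {P : Measure Ω}
    {U : Ω → ℝ} (hU : Measurable U) (hUunif : Measure.map U P = volume.restrict (Icc 0 1)) :
    ∀ᵐ ω ∂P, U ω ∈ Ioc 0 1 := by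
  rw [← ae_map_iff (p := (· ∈ Ioc (0 : ℝ) 1)) hU.aemeasurable measurableSet_Ioc, hUunif,
    ← Measure.restrict_congr_set Ioc_ae_eq_Icc]
  exact ae_restrict_mem measurableSet_Ioc

theorem distTransform_same_copula_general {Ω : Type*} [MeasurableSpace Ω]
    (P : Measure Ω) [IsProbabilityMeasure P] {n : ℕ}
    (X U : Fin n → Ω → ℝ)
    (hX : ∀ i, Measurable (X i)) (hU : ∀ i, Measurable (U i))
    (hUunif : ∀ i, Measure.map (U i) P = volume.restrict (Icc (0:ℝ) 1)) :
    ∀ x : Fin n → ℝ,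
      (P {ω | ∀ i, X i ω ≤ x i}).toReal =
        (P {ω | ∀ i, distTransform P (X i) (X i ω) (U i ω)
              ≤ (P {ω' | X i ω' ≤ x i}).toReal}).toReal := by
  intro x
  have hiff : ∀ᵐ ω ∂P, ∀ i, X i ω ≤ x i ↔
      distTransform P (X i) (X i ω) (U i ω) ≤ P.real {ω' | X i ω' ≤ x i} :=
    ae_all_iff.2 fun i ↦ ae_le_iff_distTransform_le_cdf P (hX i)
      (ae_mem_Ioc_of_map_eq_uniform (hU i) (hUunif i)) (x i)
  refine congrArg ENNReal.toReal (measure_congr ?_)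
  filter_upwards [hiff] with ω hω
  exact propext (forall_congr' hω)

/-- `X_1,…,X_n` and their distributional transforms have the same copula:
the joint distribution function `C` of the distributional transforms
`T_{X_i}(X_i,U_i)` satisfies
`P(X_1 ≤ x_1, …, X_n ≤ x_n) = C(F_{X_1}(x_1), …, F_{X_n}(x_n))` for all `x_i`. -/
theorem distTransform_same_copula {Ω : Type*} [MeasurableSpace Ω]
    (P : Measure Ω) [IsProbabilityMeasure P] {n : ℕ}
    (X U : Fin n → Ω → ℝ)
    (hX : ∀ i, Measurable (X i)) (hU : ∀ i, Measurable (U i))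
    (hUunif : ∀ i, Measure.map (U i) P = volume.restrict (Icc (0:ℝ) 1))
    (hUindep : iIndepFun U P)
    (hXU : IndepFun (fun ω i => X i ω) (fun ω i => U i ω) P) :
    ∀ x : Fin n → ℝ,
      (P {ω | ∀ i, X i ω ≤ x i}).toReal =
        (P {ω | ∀ i, distTransform P (X i) (X i ω) (U i ω)
              ≤ (P {ω' | X i ω' ≤ x i}).toReal}).toReal :=
  distTransform_same_copula_general P X U hX hU hUunif
end

section
/- Fundamental theorem of the empirical distributional transform: Let X^{(k)}, k ∈ ℕ, be independent copies of a real-valued random variable X. Then lim_{N→∞} sup_{x∈ℝ, u∈[0,1]} |ᴺT(x,u;X^{(1)},…,X^{(N)}) − T_X(x,u)| = 0 almost surely, where T_X(x,u) := P(X < x) + u·P(X = x). -/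
/-! By the strong law of large numbers, almost surely the empirical frequencies of the half-lines
`(-∞, t)` and `(-∞, t]` converge to their probabilities simultaneously for all `t` in a countable
set, which we take to consist of quantiles of the law `μ` of `X` at rational levels. Every lower
set of `ℝ` either contains `(-∞, q]` or lies in `(-∞, q)` for a `c`-quantile `q`, so monotonicity
traps both its `μ`-mass and its empirical frequency on the same side of `c` (up to the error at
`q`); with the levels `i / m` this gives the Glivenko–Cantelli theorem, uniformly over all lower
sets. Both distributional transforms are the convex combinations `(1 - u) F(-∞, x) + u F(-∞, x]`
of such frequencies, so the uniform convergence passes to them. -/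

open MeasureTheory ProbabilityTheory Set Filter

/-- The empirical distributional transform based on the first `N` samples of `xs`:
`ᴺT(x,u; x⁽¹⁾,…,x⁽ᴺ⁾) = (1/N) ∑_{k=1}^N [1_{(-∞,x)}(x⁽ᵏ⁾) + u · 1_{{x}}(x⁽ᵏ⁾)]`. -/
noncomputable def empDistTransform (N : ℕ) (xs : ℕ → ℝ) (x u : ℝ) : ℝ :=
  (N : ℝ)⁻¹ * ∑ k ∈ Finset.range N,
    ((if xs k < x then (1:ℝ) else 0) + u * (if xs k = x then (1:ℝ) else 0))

open Topology

theorem abs_sub_le_of_forall_nat_div {a b δ : ℝ} {m : ℕ} (hm : 0 < m) (hδ : 0 ≤ δ)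
    (ha : a ∈ Icc 0 1) (hb : b ∈ Icc 0 1)
    (h : ∀ i ∈ Finset.Ioo 0 m, ((i : ℝ) / m ≤ a ∧ (i : ℝ) / m - δ ≤ b) ∨
      (a ≤ (i : ℝ) / m ∧ b ≤ (i : ℝ) / m + δ)) :
    |b - a| ≤ 1 / m + δ := by
  have hm' : (0 : ℝ) < m := by exact_mod_cast hm
  rw [abs_sub_le_iff]
  constructor
  · by_contra! hlt
    set i := ⌊a * m⌋₊ + 1
    have hai : a < i / m := by
      rw [lt_div_iff₀ hm', Nat.cast_succ]
      exact Nat.lt_floor_add_one (a * m)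
    have hia : (i : ℝ) / m ≤ a + 1 / m := by
      rw [div_le_iff₀ hm', add_mul, one_div_mul_cancel hm'.ne', Nat.cast_succ]
      linarith [Nat.floor_le (mul_nonneg ha.1 hm'.le)]
    have him : i < m := by
      have : (i : ℝ) / m < 1 := by linarith [hb.2]
      exact_mod_cast (div_lt_one hm').1 this
    rcases h i (Finset.mem_Ioo.2 ⟨by omega, him⟩) with h' | h' <;> linarith [h'.1, h'.2]
  · by_contra! hlt
    have hceil : 1 ≤ ⌈a * m⌉₊ := Nat.one_le_iff_ne_zero.2 <| by
      have : 0 < a := by linarith [hb.1, one_div_pos.2 hm']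
      rw [Ne, Nat.ceil_eq_zero, not_le]
      positivity
    set i := ⌈a * m⌉₊ - 1
    have hi : (i : ℝ) = ⌈a * m⌉₊ - 1 := by rw [Nat.cast_sub hceil, Nat.cast_one]
    have hia : (i : ℝ) / m < a := by
      rw [div_lt_iff₀ hm', hi]
      linarith [Nat.ceil_lt_add_one (mul_nonneg ha.1 hm'.le)]
    have hai : a - 1 / m ≤ i / m := by
      rw [le_div_iff₀ hm', sub_mul, one_div_mul_cancel hm'.ne', hi]
      linarith [Nat.le_ceil (a * m)]
    have hi0 : 0 < i := by
      have : (0 : ℝ) < i / m := by linarith [hb.1]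
      exact_mod_cast (div_pos_iff_of_pos_right hm').1 this
    have him : i < m := by
      have : (i : ℝ) / m < 1 := by linarith [ha.2]
      exact_mod_cast (div_lt_one hm').1 this
    rcases h i (Finset.mem_Ioo.2 ⟨hi0, him⟩) with h' | h' <;> linarith [h'.1, h'.2]

theorem exists_measureReal_Iio_le_le_measureReal_Iic (μ : Measure ℝ) [IsProbabilityMeasure μ]
    {c : ℝ} (hc : c ∈ Ioo 0 1) : ∃ q, μ.real (Iio q) ≤ c ∧ c ≤ μ.real (Iic q) := by
  set S := {x | c ≤ cdf μ x}
  obtain ⟨x₁, hx₁⟩ := ((tendsto_cdf_atTop μ).eventually (eventually_ge_nhds hc.2)).exists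
  obtain ⟨x₀, hx₀⟩ :=
    eventually_atBot.1 ((tendsto_cdf_atBot μ).eventually (eventually_lt_nhds hc.1))
  have hbdd : BddBelow S := ⟨x₀, fun y hy => le_of_not_gt fun hyx => (hx₀ y hyx.le).not_ge hy⟩
  refine ⟨sInf S, ?_, ?_⟩
  · have hIio : μ.real (Iio (sInf S)) = Function.leftLim (cdf μ) (sInf S) := by
      rw [measureReal_def]
      conv_lhs => rw [← measure_cdf μ]
      rw [(cdf μ).measure_Iio (tendsto_cdf_atBot μ), sub_zero,
        ENNReal.toReal_ofReal
        ((cdf_nonneg μ _).trans ((monotone_cdf μ).le_leftLim (sub_one_lt _)))]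
    rw [hIio, (monotone_cdf μ).leftLim_eq_sSup]
    refine csSup_le (nonempty_Iio.image _) ?_
    rintro _ ⟨y, hy, rfl⟩
    exact (not_le.1 (notMem_of_lt_csInf (s := S) hy hbdd)).le
  · rw [← cdf_eq_real]
    refine ge_of_tendsto (((cdf μ).right_continuous _).mono Ioi_subset_Ici_self) ?_
    refine eventually_nhdsWithin_of_forall fun y hy => ?_
    obtain ⟨x, hxS, hxy⟩ := exists_lt_of_csInf_lt ⟨x₁, hx₁⟩ hy
    exact hxS.trans (monotone_cdf μ hxy.le)

theorem IsLowerSet.level_le_or_le_level {s : Set ℝ} (hs : IsLowerSet s) {μ : Measure ℝ}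
    [IsFiniteMeasure μ] {G : Set ℝ → ℝ} (hG : Monotone G) {t c δ : ℝ}
    (hIio : μ.real (Iio t) ≤ c) (hIic : c ≤ μ.real (Iic t))
    (hGIio : |G (Iio t) - μ.real (Iio t)| ≤ δ) (hGIic : |G (Iic t) - μ.real (Iic t)| ≤ δ) :
    (c ≤ μ.real s ∧ c - δ ≤ G s) ∨ (μ.real s ≤ c ∧ G s ≤ c + δ) := by
  by_cases ht : t ∈ s
  · have hsub : Iic t ⊆ s := hs.Iic_subset ht
    have hGs := hG hsub
    exact Or.inl ⟨hIic.trans (measureReal_mono hsub), by linarith [(abs_le.1 hGIic).1]⟩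
  · have hsub : s ⊆ Iio t := fun y hy => not_le.1 fun hty => ht (hs hty hy)
    have hGs := hG hsub
    exact Or.inr ⟨(measureReal_mono hsub).trans hIio, by linarith [(abs_le.1 hGIio).2]⟩

theorem exists_countable_forall_tendstoUniformlyOn_isLowerSet (μ : Measure ℝ)
    [IsProbabilityMeasure μ] {ι : Type*} (l : Filter ι) :
    ∃ Q : Set ℝ, Q.Countable ∧ ∀ G : ι → Set ℝ → ℝ, (∀ n, Monotone (G n)) →
      (∀ n s, G n s ∈ Icc 0 1) →
      (∀ t ∈ Q, Tendsto (G · (Iio t)) l (𝓝 (μ.real (Iio t))) ∧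
        Tendsto (G · (Iic t)) l (𝓝 (μ.real (Iic t)))) →
      TendstoUniformlyOn G μ.real l {s | IsLowerSet s} := by
  choose! q hq using fun c (hc : c ∈ Ioo 0 1) => exists_measureReal_Iio_le_le_measureReal_Iic μ hc
  refine ⟨q '' range ((↑) : ℚ → ℝ), (countable_range _).image q, fun G hG hG01 hconv => ?_⟩
  rw [Metric.tendstoUniformlyOn_iff]
  intro ε hε
  obtain ⟨m, hm⟩ := exists_nat_one_div_lt (half_pos hε)
  have hlevel : ∀ i ∈ Finset.Ioo 0 (m + 1), ((i : ℝ) / (m + 1 : ℕ)) ∈ Ioo 0 1 := by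
    intro i hi
    obtain ⟨hi0, him⟩ := Finset.mem_Ioo.1 hi
    exact ⟨by positivity, (div_lt_one (by positivity)).2 (by exact_mod_cast him)⟩
  have hclose : ∀ᶠ n in l, ∀ i ∈ Finset.Ioo 0 (m + 1),
      dist (G n (Iio (q (i / (m + 1 : ℕ))))) (μ.real (Iio (q (i / (m + 1 : ℕ))))) < ε / 2 ∧
      dist (G n (Iic (q (i / (m + 1 : ℕ))))) (μ.real (Iic (q (i / (m + 1 : ℕ))))) < ε / 2 := by
    refine (Finset.eventually_all _).2 fun i hi => ?_
    have hQ : q (i / (m + 1 : ℕ)) ∈ q '' range ((↑) : ℚ → ℝ) :=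
      mem_image_of_mem q ⟨i / (m + 1 : ℕ), by push_cast; rfl⟩
    obtain ⟨hIio, hIic⟩ := hconv _ hQ
    exact (Metric.tendsto_nhds.1 hIio _ (half_pos hε)).and
      (Metric.tendsto_nhds.1 hIic _ (half_pos hε))
  filter_upwards [hclose] with n hn s hs
  rw [dist_comm, Real.dist_eq]
  calc |G n s - μ.real s| ≤ 1 / (m + 1 : ℕ) + ε / 2 := by
        refine abs_sub_le_of_forall_nat_div m.succ_pos (half_pos hε).le
          ⟨measureReal_nonneg, measureReal_le_one⟩ (hG01 n s) fun i hi => ?_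
        obtain ⟨hIio, hIic⟩ := hq _ (hlevel i hi)
        exact hs.level_le_or_le_level (hG n) hIio hIic (hn i hi).1.le (hn i hi).2.le
    _ < ε := by push_cast; linarith

noncomputable def empiricalFreq {α : Type*} (N : ℕ) (xs : ℕ → α) (s : Set α) : ℝ :=
  (N : ℝ)⁻¹ * ∑ k ∈ Finset.range N, s.indicator 1 (xs k)

section EmpiricalFreq

variable {α : Type*} {N : ℕ} {xs : ℕ → α}

theorem monotone_empiricalFreq : Monotone (empiricalFreq N xs) := fun _ _ hst =>
  mul_le_mul_of_nonneg_left (Finset.sum_le_sum fun _ _ =>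
    indicator_le_indicator_of_subset hst (fun _ => zero_le_one) _) (by positivity)

theorem empiricalFreq_mem_Icc (s : Set α) : empiricalFreq N xs s ∈ Icc 0 1 := by
  have hsum : ∑ k ∈ Finset.range N, s.indicator (1 : α → ℝ) (xs k) ≤ N := by
    simpa using Finset.sum_le_sum fun k (_ : k ∈ Finset.range N) =>
      indicator_le_self' (fun _ _ => zero_le_one) (xs k) (f := (1 : α → ℝ))
  refine ⟨mul_nonneg (by positivity) <| Finset.sum_nonneg fun _ _ =>
    indicator_nonneg (fun _ _ => zero_le_one) _, ?_⟩
  rcases N.eq_zero_or_pos with rfl | hN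
  · simp [empiricalFreq]
  · exact inv_mul_le_one_of_le₀ hsum (by positivity)

theorem ae_tendsto_empiricalFreq [MeasurableSpace α] {Ω : Type*} [MeasurableSpace Ω]
    {P : Measure Ω} [IsFiniteMeasure P] {X₀ : Ω → α} {X : ℕ → Ω → α} (hindep : iIndepFun X P)
    (hident : ∀ k, IdentDistrib (X k) X₀ P P) {s : Set α} (hs : MeasurableSet s) :
    ∀ᵐ ω ∂P, Tendsto (fun N => empiricalFreq N (X · ω) s) atTop (𝓝 ((P.map X₀).real s)) := by
  have hf : Measurable (s.indicator (1 : α → ℝ)) := measurable_one.indicator hs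
  set Y : ℕ → Ω → ℝ := fun k => s.indicator 1 ∘ X k
  have hYint : Integrable (Y 0) P := by
    refine Integrable.of_bound
      (hf.comp_aemeasurable (hident 0).aemeasurable_fst).aestronglyMeasurable 1 ?_
    exact Eventually.of_forall fun ω => by
      simp only [Y, Function.comp_apply, indicator, Pi.one_apply]; split_ifs <;> simp
  have hmean : P[Y 0] = (P.map X₀).real s := by
    rw [← integral_indicator_one hs, ← (hident 0).map_eq,
      integral_map (hident 0).aemeasurable_fst hf.aestronglyMeasurable]
    rfl
  have hslln := strong_law_ae_real Y hYint
    (fun i j hij => (hindep.indepFun hij).comp hf hf)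
    (fun k => ((hident k).trans (hident 0).symm).comp hf)
  filter_upwards [hslln] with ω hω
  rw [hmean] at hω
  simpa only [empiricalFreq, div_eq_inv_mul, Y, Function.comp_apply] using hω

end EmpiricalFreq

theorem empDistTransform_eq (N : ℕ) (xs : ℕ → ℝ) (x u : ℝ) :
    empDistTransform N xs x u =
      (1 - u) * empiricalFreq N xs (Iio x) + u * empiricalFreq N xs (Iic x) := by
  have hterm : ∀ y, ((if y < x then (1 : ℝ) else 0) + u * if y = x then 1 else 0) =
      (1 - u) * (Iio x).indicator 1 y + u * (Iic x).indicator 1 y := by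
    intro y
    rcases lt_trichotomy y x with h | rfl | h
    · simp [h, h.le, h.ne]
    · simp
    · simp [h.not_gt, h.not_ge, h.ne']
  simp only [empDistTransform, empiricalFreq, hterm, Finset.sum_add_distrib, ← Finset.mul_sum]
  ring

theorem distTransform_eq {Ω : Type*} [MeasurableSpace Ω] {P : Measure Ω} [IsFiniteMeasure P]
    {X₀ : Ω → ℝ} (hX₀ : AEMeasurable X₀ P) (x u : ℝ) :
    distTransform P X₀ x u = (1 - u) * (P.map X₀).real (Iio x) + u * (P.map X₀).real (Iic x) := by
  rw [← Iio_union_right, measureReal_union (by simp) (measurableSet_singleton x), measureReal_def,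
    measureReal_def, Measure.map_apply_of_aemeasurable hX₀ measurableSet_Iio,
    Measure.map_apply_of_aemeasurable hX₀ (measurableSet_singleton x)]
  simp only [distTransform, preimage, mem_Iio, mem_singleton_iff]
  ring

theorem tendsto_iSup_abs_sub_of_tendstoUniformlyOn_isLowerSet {ι : Type*} {l : Filter ι}
    {G : ι → Set ℝ → ℝ} {F : Set ℝ → ℝ} (h : TendstoUniformlyOn G F l {s | IsLowerSet s}) :
    Tendsto (fun n => ⨆ x : ℝ, ⨆ u : Icc (0 : ℝ) 1,
      |((1 - u) * G n (Iio x) + u * G n (Iic x)) - ((1 - u) * F (Iio x) + u * F (Iic x))|)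
      l (𝓝 0) := by
  refine Metric.tendsto_nhds.2 fun ε hε => ?_
  filter_upwards [Metric.tendstoUniformlyOn_iff.1 h _ (half_pos hε)] with n hn
  have hsup : ∀ x : ℝ, ∀ u : Icc (0 : ℝ) 1,
      |((1 - u) * G n (Iio x) + u * G n (Iic x)) - ((1 - u) * F (Iio x) + u * F (Iic x))| ≤
        ε / 2 := by
    rintro x ⟨u, hu0, hu1⟩
    have hIio : |G n (Iio x) - F (Iio x)| ≤ ε / 2 := by
      rw [← Real.dist_eq, dist_comm]; exact (hn _ (isLowerSet_Iio x)).le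
    have hIic : |G n (Iic x) - F (Iic x)| ≤ ε / 2 := by
      rw [← Real.dist_eq, dist_comm]; exact (hn _ (isLowerSet_Iic x)).le
    rw [abs_le] at hIio hIic ⊢
    constructor <;> nlinarith
  rw [Real.dist_0_eq_abs, abs_of_nonneg (Real.iSup_nonneg fun x => Real.iSup_nonneg fun u =>
    abs_nonneg _)]
  exact (Real.iSup_le (fun x => Real.iSup_le (hsup x) (half_pos hε).le) (half_pos hε).le).trans_lt
    (half_lt_self hε)

theorem empDistTransform_tendsto_uniformly_general {Ω : Type*} [MeasurableSpace Ω]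
    (P : Measure Ω) [IsProbabilityMeasure P]
    (X₀ : Ω → ℝ) (X : ℕ → Ω → ℝ)
    (hindep : iIndepFun X P)
    (hident : ∀ k, IdentDistrib (X k) X₀ P P) :
    ∀ᵐ ω ∂P, Tendsto (fun N =>
        ⨆ x : ℝ, ⨆ u : Icc (0:ℝ) 1,
          |empDistTransform N (fun k => X k ω) x (u : ℝ) - distTransform P X₀ x (u : ℝ)|)
      atTop (nhds 0) := by
  have hX₀ : AEMeasurable X₀ P := (hident 0).aemeasurable_snd
  have : IsProbabilityMeasure (P.map X₀) := Measure.isProbabilityMeasure_map hX₀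
  obtain ⟨Q, hQ, hunif⟩ :=
    exists_countable_forall_tendstoUniformlyOn_isLowerSet (P.map X₀) (atTop : Filter ℕ)
  have hconv : ∀ᵐ ω ∂P, ∀ t ∈ Q,
      Tendsto (fun N => empiricalFreq N (X · ω) (Iio t)) atTop (𝓝 ((P.map X₀).real (Iio t))) ∧
      Tendsto (fun N => empiricalFreq N (X · ω) (Iic t)) atTop (𝓝 ((P.map X₀).real (Iic t))) :=
    (ae_ball_iff hQ).2 fun t _ => (ae_tendsto_empiricalFreq hindep hident measurableSet_Iio).and
      (ae_tendsto_empiricalFreq hindep hident measurableSet_Iic)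
  filter_upwards [hconv] with ω hω
  simp only [empDistTransform_eq, distTransform_eq hX₀]
  exact tendsto_iSup_abs_sub_of_tendstoUniformlyOn_isLowerSet
    (hunif _ (fun _ => monotone_empiricalFreq) (fun _ => empiricalFreq_mem_Icc) hω)

/-- Fundamental theorem of the empirical distributional transform:
for i.i.d. copies `X⁽ᵏ⁾` of `X`, almost surely
`sup_{x ∈ ℝ, u ∈ [0,1]} |ᴺT(x,u;X⁽¹⁾,…,X⁽ᴺ⁾) − T_X(x,u)| → 0` as `N → ∞`. -/
theorem empDistTransform_tendsto_uniformly {Ω : Type*} [MeasurableSpace Ω]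
    (P : Measure Ω) [IsProbabilityMeasure P]
    (X₀ : Ω → ℝ) (X : ℕ → Ω → ℝ)
    (hX₀ : Measurable X₀) (hX : ∀ k, Measurable (X k))
    (hindep : iIndepFun X P)
    (hident : ∀ k, IdentDistrib (X k) X₀ P P) :
    ∀ᵐ ω ∂P, Tendsto (fun N =>
        ⨆ x : ℝ, ⨆ u : Icc (0:ℝ) 1,
          |empDistTransform N (fun k => X k ω) x (u : ℝ) - distTransform P X₀ x (u : ℝ)|)
      atTop (nhds 0) :=
  empDistTransform_tendsto_uniformly_general P X₀ X hindep hident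
end

section
/- Uniform equicontinuity of sample distance multivariance on transformed samples: Let ψ_i(x) := ∫ (1 − cos(x·t)) ρ_i(dt) for symmetric σ-finite measures ρ_i on ℝ^{d_i}∖{0} with ∫ min(1,|t_i|²) ρ_i(dt_i) < ∞ (so each ψ_i is continuous, hence uniformly continuous on [−1,1]^{d_i}). Then the family of sample distance multivariances ᴺM, N ∈ ℕ, restricted to samples with values in [0,1]^{d_1+…+d_n}, is uniformly continuous uniformly in N: for every ε > 0 there exists δ > 0 such that for all N ∈ ℕ and all samples x^{(1)},…,x^{(N)}, y^{(1)},…,y^{(N)} ∈ [0,1]^{d_1+…+d_n}, max_{1≤k≤N} |x^{(k)} − y^{(k)}| < δ implies |ᴺM(x^{(1)},…,x^{(N)}) − ᴺM(y^{(1)},…,y^{(N)})| < ε. -/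
/-!
Each `ψ i` is continuous by dominated convergence, since `1 - cos s ≤ 2 min(1, s²)` and
`∫ min(1, ‖t‖²) dρ_i < ∞`; hence it is bounded and uniformly continuous on the compact cube
`[-1,1]^{d_i}`, which contains all differences of points of a sample in `[0,1]^{d_i}`.
Double centring an `N × N` kernel costs at most a factor `4` in the sup norm, whatever `N`,
so `ᴺM²` is Lipschitz in the kernel entries `ψ_i(x_i^{(l)} - x_i^{(m)})` uniformly in `N`.
Finally `|√a - √b| ≤ √|a - b|`.
-/
open MeasureTheory ProbabilityTheory Set Filter
/-- Squared sample distance multivariance of the subfamily with indices in `I`: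
`ᴺM² = (1/N²) ∑_{j,k} ∏_{i∈I} ᴺΨ_i(j,k)` with
`ᴺΨ_i(j,k) = −ψ_i(x_i^{(j)} − x_i^{(k)}) − (1/N²) ∑_{l,m} ψ_i(x_i^{(l)} − x_i^{(m)})
+ (1/N) ∑_l ψ_i(x_i^{(l)} − x_i^{(k)}) + (1/N) ∑_m ψ_i(x_i^{(j)} − x_i^{(m)})`. -/
noncomputable def sampleMultivariance2 {n : ℕ} {d : Fin n → ℕ}
    (ψ : (i : Fin n) → (Fin (d i) → ℝ) → ℝ) (I : Finset (Fin n))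
    {N : ℕ} (x : Fin N → ((i : Fin n) → Fin (d i) → ℝ)) : ℝ :=
  ((N : ℝ) ^ 2)⁻¹ * ∑ j : Fin N, ∑ k : Fin N, ∏ i ∈ I,
    (-(ψ i (x j i - x k i))
      - ((N : ℝ) ^ 2)⁻¹ * ∑ l : Fin N, ∑ m : Fin N, ψ i (x l i - x m i)
      + (N : ℝ)⁻¹ * ∑ l : Fin N, ψ i (x l i - x k i)
      + (N : ℝ)⁻¹ * ∑ m : Fin N, ψ i (x j i - x m i))

open Finset Metric

lemma abs_sqrt_sub_sqrt_le_sqrt_abs_sub (a b : ℝ) : |√a - √b| ≤ √|a - b| := by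
  wlog hba : b ≤ a generalizing a b
  · rw [abs_sub_comm, abs_sub_comm a]
    exact this b a (le_of_not_ge hba)
  rw [abs_of_nonneg (sub_nonneg.2 (Real.sqrt_le_sqrt hba)), abs_of_nonneg (sub_nonneg.2 hba),
    sub_le_iff_le_add, Real.sqrt_le_iff]
  refine ⟨by positivity, ?_⟩
  have hab := Real.sq_sqrt (sub_nonneg.2 hba)
  rcases le_or_gt 0 b with hb | hb
  · nlinarith [Real.sq_sqrt hb, Real.sqrt_nonneg b, Real.sqrt_nonneg (a - b)]
  · rw [Real.sqrt_eq_zero_of_nonpos hb.le]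
    nlinarith

lemma abs_prod_sub_prod_le {ι : Type*} [DecidableEq ι] (s : Finset ι) {f g : ι → ℝ} {C η : ℝ}
    (hf : ∀ i ∈ s, |f i| ≤ C) (hg : ∀ i ∈ s, |g i| ≤ C) (hfg : ∀ i ∈ s, |f i - g i| ≤ η) :
    |∏ i ∈ s, f i - ∏ i ∈ s, g i| ≤ #s * C ^ (#s - 1) * η := by
  induction s using Finset.induction_on with
  | empty => simp
  | @insert a s ha ih =>
    simp only [Finset.forall_mem_insert] at hf hg hfg
    have hC : 0 ≤ C := (abs_nonneg _).trans hf.1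
    have hη : 0 ≤ η := (abs_nonneg _).trans hfg.1
    have hprod_g : |∏ i ∈ s, g i| ≤ C ^ #s := by
      rw [abs_prod, ← prod_const]
      exact prod_le_prod (fun i _ => abs_nonneg _) hg.2
    have hpow : C * (#s * C ^ (#s - 1)) = #s * C ^ #s := by
      rcases eq_or_ne #s 0 with hs | hs
      · simp [hs]
      · rw [mul_left_comm, mul_pow_sub_one hs]
    rw [prod_insert ha, prod_insert ha, card_insert_of_notMem ha, Nat.add_sub_cancel]
    calc |f a * ∏ i ∈ s, f i - g a * ∏ i ∈ s, g i|
        = |f a * (∏ i ∈ s, f i - ∏ i ∈ s, g i) + (f a - g a) * ∏ i ∈ s, g i| := by ring_nf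
      _ ≤ |f a| * |∏ i ∈ s, f i - ∏ i ∈ s, g i| + |f a - g a| * |∏ i ∈ s, g i| := by
        rw [← abs_mul, ← abs_mul]
        exact abs_add_le _ _
      _ ≤ C * (#s * C ^ (#s - 1) * η) + η * C ^ #s := by
        gcongr
        exacts [hf.1, ih hf.2 hg.2 hfg.2, hfg.1]
      _ = C * (#s * C ^ (#s - 1)) * η + η * C ^ #s := by ring
      _ = (#s + 1 : ℕ) * C ^ #s * η := by
        rw [hpow]
        push_cast
        ring

section Centering

variable {N : ℕ}

lemma abs_inv_natCast_mul_sum_le {f : Fin N → ℝ} {C : ℝ} (hC : 0 ≤ C) (hf : ∀ l, |f l| ≤ C) :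
    |(N : ℝ)⁻¹ * ∑ l, f l| ≤ C := by
  rcases N.eq_zero_or_pos with rfl | hN
  · simpa using hC
  rw [abs_mul, abs_inv, Nat.abs_cast, inv_mul_le_iff₀ (by positivity)]
  calc |∑ l, f l| ≤ ∑ l, |f l| := abs_sum_le_sum_abs _ _
    _ ≤ ∑ _l : Fin N, C := sum_le_sum fun l _ => hf l
    _ = N * C := by simp

lemma abs_inv_natCast_sq_mul_sum_sum_le {f : Fin N → Fin N → ℝ} {C : ℝ} (hC : 0 ≤ C)
    (hf : ∀ l m, |f l m| ≤ C) : |((N : ℝ) ^ 2)⁻¹ * ∑ l, ∑ m, f l m| ≤ C := by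
  have hsplit : ((N : ℝ) ^ 2)⁻¹ * ∑ l, ∑ m, f l m = (N : ℝ)⁻¹ * ∑ l, (N : ℝ)⁻¹ * ∑ m, f l m := by
    simp only [mul_sum, sq, mul_inv, mul_assoc]
  rw [hsplit]
  exact abs_inv_natCast_mul_sum_le hC fun l => abs_inv_natCast_mul_sum_le hC (hf l)

/-- `ᴺΨ_i(j,k)` of the paper, for the kernel `a l m = ψ_i(x_i^{(l)} - x_i^{(m)})`. -/
noncomputable def doubleCentered (a : Fin N → Fin N → ℝ) (j k : Fin N) : ℝ :=
  -a j k - ((N : ℝ) ^ 2)⁻¹ * ∑ l, ∑ m, a l m + (N : ℝ)⁻¹ * ∑ l, a l k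
    + (N : ℝ)⁻¹ * ∑ m, a j m

lemma doubleCentered_sub (a b : Fin N → Fin N → ℝ) (j k : Fin N) :
    doubleCentered a j k - doubleCentered b j k = doubleCentered (a - b) j k := by
  simp only [doubleCentered, Pi.sub_apply, sum_sub_distrib]
  ring

lemma abs_doubleCentered_le {a : Fin N → Fin N → ℝ} {C : ℝ} (hC : 0 ≤ C)
    (ha : ∀ l m, |a l m| ≤ C) (j k : Fin N) : |doubleCentered a j k| ≤ 4 * C := by
  have h₁ := abs_le.1 (ha j k)
  have h₂ := abs_le.1 (abs_inv_natCast_sq_mul_sum_sum_le hC ha)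
  have h₃ := abs_le.1 (abs_inv_natCast_mul_sum_le hC fun l => ha l k)
  have h₄ := abs_le.1 (abs_inv_natCast_mul_sum_le hC fun m => ha j m)
  rw [doubleCentered, abs_le]
  constructor <;> linarith

end Centering

lemma sampleMultivariance2_eq_doubleCentered {n : ℕ} {d : Fin n → ℕ}
    (ψ : (i : Fin n) → (Fin (d i) → ℝ) → ℝ) (I : Finset (Fin n)) {N : ℕ}
    (x : Fin N → ((i : Fin n) → Fin (d i) → ℝ)) :
    sampleMultivariance2 ψ I x = ((N : ℝ) ^ 2)⁻¹ *
      ∑ j, ∑ k, ∏ i ∈ I, doubleCentered (fun l m => ψ i (x l i - x m i)) j k :=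
  rfl

lemma abs_sampleMultivariance2_sub_le {n : ℕ} {d : Fin n → ℕ}
    (ψ : (i : Fin n) → (Fin (d i) → ℝ) → ℝ) (I : Finset (Fin n)) {N : ℕ}
    {x y : Fin N → ((i : Fin n) → Fin (d i) → ℝ)} {C η : ℝ} (hC : 0 ≤ C) (hη : 0 ≤ η)
    (hx : ∀ i l m, |ψ i (x l i - x m i)| ≤ C) (hy : ∀ i l m, |ψ i (y l i - y m i)| ≤ C)
    (hxy : ∀ i l m, |ψ i (x l i - x m i) - ψ i (y l i - y m i)| ≤ η) :
    |sampleMultivariance2 ψ I x - sampleMultivariance2 ψ I y|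
      ≤ #I * (4 * C) ^ (#I - 1) * (4 * η) := by
  rw [sampleMultivariance2_eq_doubleCentered, sampleMultivariance2_eq_doubleCentered, ← mul_sub]
  simp only [← sum_sub_distrib]
  refine abs_inv_natCast_sq_mul_sum_sum_le (by positivity) fun j k => ?_
  refine abs_prod_sub_prod_le I (fun i _ => abs_doubleCentered_le hC (hx i) j k)
    (fun i _ => abs_doubleCentered_le hC (hy i) j k) fun i _ => ?_
  rw [doubleCentered_sub]
  exact abs_doubleCentered_le hη (hxy i) j k

lemma one_sub_cos_le_two_mul_min_one_sq (s : ℝ) : 1 - Real.cos s ≤ 2 * min 1 (s ^ 2) := by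
  rw [mul_min_of_nonneg _ _ zero_le_two]
  exact le_min (by linarith [Real.neg_one_le_cos s])
    (by nlinarith [Real.one_sub_sq_div_two_le_cos (x := s), sq_nonneg s])

lemma min_one_mul_le_max_mul_min_one {c x : ℝ} (hx : 0 ≤ x) :
    min 1 (c * x) ≤ max 1 c * min 1 x := by
  rcases le_total x 1 with hx1 | hx1
  · rw [min_eq_right hx1]
    exact (min_le_right _ _).trans (mul_le_mul_of_nonneg_right (le_max_right _ _) hx)
  · rw [min_eq_left hx1, mul_one]
    exact (min_le_left _ _).trans (le_max_left _ _)

lemma abs_sum_mul_le_card_mul_norm_mul_norm {D : ℕ} (x t : Fin D → ℝ) :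
    |∑ j, x j * t j| ≤ D * (‖x‖ * ‖t‖) := by
  calc |∑ j, x j * t j| ≤ ∑ j, |x j| * |t j| := by
        simpa only [abs_mul] using abs_sum_le_sum_abs (fun j => x j * t j) univ
    _ ≤ ∑ _j : Fin D, ‖x‖ * ‖t‖ := sum_le_sum fun j _ =>
        mul_le_mul (norm_le_pi_norm x j) (norm_le_pi_norm t j) (abs_nonneg _) (norm_nonneg _)
    _ = D * (‖x‖ * ‖t‖) := by simp

lemma integrable_min_one_norm_sq {E : Type*} [NormedAddCommGroup E] [MeasurableSpace E]
    [OpensMeasurableSpace E] (μ : Measure E)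
    (hmom : ∫⁻ t, ENNReal.ofReal (min 1 (‖t‖ ^ 2)) ∂μ < ⊤) :
    Integrable (fun t => min 1 (‖t‖ ^ 2)) μ :=
  ⟨by fun_prop, (hasFiniteIntegral_iff_ofReal (ae_of_all _ fun t => by positivity)).2 hmom⟩

lemma continuous_integral_one_sub_cos {D : ℕ} (μ : Measure (Fin D → ℝ))
    (hmom : ∫⁻ t, ENNReal.ofReal (min 1 (‖t‖ ^ 2)) ∂μ < ⊤) :
    Continuous fun x : Fin D → ℝ => ∫ t, (1 - Real.cos (∑ j, x j * t j)) ∂μ := by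
  refine continuous_iff_continuousAt.2 fun x₀ => ?_
  set c : ℝ := (D * (‖x₀‖ + 1)) ^ 2
  refine continuousAt_of_dominated (bound := fun t => 2 * (max 1 c * min 1 (‖t‖ ^ 2)))
    (Eventually.of_forall fun x => (Continuous.aestronglyMeasurable (by fun_prop))) ?_
    ((integrable_min_one_norm_sq μ hmom).const_mul _ |>.const_mul _)
    (ae_of_all _ fun t => (Continuous.continuousAt (by fun_prop)))
  filter_upwards [ball_mem_nhds x₀ one_pos] with x hx
  refine ae_of_all _ fun t => ?_
  have hpair : (∑ j, x j * t j) ^ 2 ≤ c * ‖t‖ ^ 2 := by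
    have hx' : ‖x‖ ≤ ‖x₀‖ + 1 := (norm_lt_of_mem_ball hx).le
    rw [← sq_abs, show c * ‖t‖ ^ 2 = (D * (‖x₀‖ + 1) * ‖t‖) ^ 2 by ring]
    refine pow_le_pow_left₀ (abs_nonneg _) ?_ 2
    calc |∑ j, x j * t j| ≤ D * (‖x‖ * ‖t‖) := abs_sum_mul_le_card_mul_norm_mul_norm x t
      _ ≤ D * (‖x₀‖ + 1) * ‖t‖ := by rw [← mul_assoc]; gcongr
  rw [Real.norm_of_nonneg (sub_nonneg.2 (Real.cos_le_one _))]
  calc 1 - Real.cos (∑ j, x j * t j) ≤ 2 * min 1 ((∑ j, x j * t j) ^ 2) :=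
        one_sub_cos_le_two_mul_min_one_sq _
    _ ≤ 2 * min 1 (c * ‖t‖ ^ 2) := by gcongr
    _ ≤ 2 * (max 1 c * min 1 (‖t‖ ^ 2)) := by
        gcongr
        exact min_one_mul_le_max_mul_min_one (by positivity)

lemma norm_sub_le_one_of_mem_Icc {ι : Type*} [Fintype ι] {κ : ι → Type*} [∀ i, Fintype (κ i)]
    {u v : (i : ι) → κ i → ℝ}
    (hu : ∀ i j, u i j ∈ Icc (0 : ℝ) 1) (hv : ∀ i j, v i j ∈ Icc (0 : ℝ) 1) : ‖u - v‖ ≤ 1 := by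
  refine (pi_norm_le_iff_of_nonneg zero_le_one).2 fun i =>
    (pi_norm_le_iff_of_nonneg zero_le_one).2 fun j => ?_
  obtain ⟨hu₀, hu₁⟩ := hu i j
  obtain ⟨hv₀, hv₁⟩ := hv i j
  rw [Pi.sub_apply, Pi.sub_apply, Real.norm_eq_abs, abs_le]
  constructor <;> linarith

lemma sampleMultivariance2_uniformly_equicontinuous_of_continuous {n : ℕ} {d : Fin n → ℕ}
    (ψ : (i : Fin n) → (Fin (d i) → ℝ) → ℝ) (hψ : ∀ i, Continuous (ψ i)) :
    ∀ ε > (0:ℝ), ∃ δ > (0:ℝ), ∀ (N : ℕ)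
      (x y : Fin N → ((i : Fin n) → Fin (d i) → ℝ)),
      (∀ k i j, x k i j ∈ Icc (0:ℝ) 1) → (∀ k i j, y k i j ∈ Icc (0:ℝ) 1) →
      (∀ k, dist (x k) (y k) < δ) →
      |√(sampleMultivariance2 ψ univ x) - √(sampleMultivariance2 ψ univ y)| < ε := by
  intro ε hε
  set Ψ : ((i : Fin n) → Fin (d i) → ℝ) → Fin n → ℝ := fun z i => ψ i (z i)
  have hΨ : ContinuousOn Ψ (closedBall 0 1) :=
    (continuous_pi fun i => (hψ i).comp (continuous_apply i)).continuousOn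
  obtain ⟨C, hC⟩ := (isCompact_closedBall 0 1).exists_bound_of_continuousOn hΨ
  have hC₀ : 0 ≤ C := (norm_nonneg _).trans (hC 0 (mem_closedBall_self zero_le_one))
  set L : ℝ := #(univ : Finset (Fin n)) * (4 * C) ^ (#(univ : Finset (Fin n)) - 1) * 4
  obtain ⟨η, hη, hLη⟩ := exists_pos_mul_lt (pow_pos hε 2) L
  obtain ⟨δ, hδ, hΨδ⟩ := Metric.uniformContinuousOn_iff.1
    ((isCompact_closedBall 0 1).uniformContinuousOn_of_continuous hΨ) η hη
  refine ⟨δ / 2, half_pos hδ, fun N x y hx hy hxy => ?_⟩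
  have hxK : ∀ l m, x l - x m ∈ closedBall 0 1 := fun l m =>
    mem_closedBall_zero_iff.2 (norm_sub_le_one_of_mem_Icc (hx l) (hx m))
  have hyK : ∀ l m, y l - y m ∈ closedBall 0 1 := fun l m =>
    mem_closedBall_zero_iff.2 (norm_sub_le_one_of_mem_Icc (hy l) (hy m))
  have hbound : ∀ z ∈ closedBall (0 : (i : Fin n) → Fin (d i) → ℝ) 1, ∀ i, |ψ i (z i)| ≤ C :=
    fun z hz i => (norm_le_pi_norm (Ψ z) i).trans (hC z hz)
  have hclose : ∀ i l m, |ψ i (x l i - x m i) - ψ i (y l i - y m i)| ≤ η := by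
    intro i l m
    have hdist : dist (x l - x m) (y l - y m) < δ :=
      (dist_sub_sub_le _ _ _ _).trans_lt (by linarith [hxy l, hxy m])
    exact (dist_le_pi_dist (Ψ (x l - x m)) (Ψ (y l - y m)) i).trans
      (hΨδ _ (hxK l m) _ (hyK l m) hdist).le
  have hM := abs_sampleMultivariance2_sub_le ψ univ hC₀ hη.le
    (fun i l m => hbound _ (hxK l m) i) (fun i l m => hbound _ (hyK l m) i) hclose
  calc |√(sampleMultivariance2 ψ univ x) - √(sampleMultivariance2 ψ univ y)|
      ≤ √|sampleMultivariance2 ψ univ x - sampleMultivariance2 ψ univ y| :=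
        abs_sqrt_sub_sqrt_le_sqrt_abs_sub _ _
    _ < ε := (Real.sqrt_lt' hε).2 (hM.trans_lt (by linarith))

theorem sampleMultivariance_uniformly_equicontinuous_general {n : ℕ} {d : Fin n → ℕ}
    (ρ : (i : Fin n) → Measure (Fin (d i) → ℝ))
    (hmom : ∀ i, ∫⁻ t, ENNReal.ofReal (min 1 (‖t‖ ^ 2)) ∂(ρ i) < ⊤)
    (ψ : (i : Fin n) → (Fin (d i) → ℝ) → ℝ)
    (hψ : ∀ i x, ψ i x = ∫ t, (1 - Real.cos (∑ j, x j * t j)) ∂(ρ i)) :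
    ∀ ε > (0:ℝ), ∃ δ > (0:ℝ), ∀ (N : ℕ)
      (x y : Fin N → ((i : Fin n) → Fin (d i) → ℝ)),
      (∀ k i j, x k i j ∈ Icc (0:ℝ) 1) → (∀ k i j, y k i j ∈ Icc (0:ℝ) 1) →
      (∀ k, dist (x k) (y k) < δ) →
      |Real.sqrt (sampleMultivariance2 ψ Finset.univ x)
        - Real.sqrt (sampleMultivariance2 ψ Finset.univ y)| < ε := by
  refine sampleMultivariance2_uniformly_equicontinuous_of_continuous ψ fun i => ?_
  rw [show ψ i = _ from funext (hψ i)]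
  exact continuous_integral_one_sub_cos (ρ i) (hmom i)

/-- Uniform equicontinuity of sample distance multivariance on
transformed samples: with `ψ_i(x) = ∫ (1 − cos(x·t)) ρ_i(dt)` for symmetric σ-finite
measures `ρ_i` on `ℝ^{d_i}∖{0}` with `∫ min(1,|t|²) ρ_i(dt) < ∞`, the family of sample
distance multivariances `ᴺM`, `N ∈ ℕ`, restricted to samples with values in
`[0,1]^{d_1+…+d_n}`, is uniformly continuous uniformly in `N`. -/
theorem sampleMultivariance_uniformly_equicontinuous {n : ℕ} {d : Fin n → ℕ}
    (ρ : (i : Fin n) → Measure (Fin (d i) → ℝ)) [∀ i, SigmaFinite (ρ i)]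
    (hsym : ∀ i, Measure.map (fun t => -t) (ρ i) = ρ i)
    (hzero : ∀ i, ρ i {0} = 0)
    (hmom : ∀ i, ∫⁻ t, ENNReal.ofReal (min 1 (‖t‖ ^ 2)) ∂(ρ i) < ⊤)
    (ψ : (i : Fin n) → (Fin (d i) → ℝ) → ℝ)
    (hψ : ∀ i x, ψ i x = ∫ t, (1 - Real.cos (∑ j, x j * t j)) ∂(ρ i)) :
    ∀ ε > (0:ℝ), ∃ δ > (0:ℝ), ∀ (N : ℕ)
      (x y : Fin N → ((i : Fin n) → Fin (d i) → ℝ)),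
      (∀ k i j, x k i j ∈ Icc (0:ℝ) 1) → (∀ k i j, y k i j ∈ Icc (0:ℝ) 1) →
      (∀ k, dist (x k) (y k) < δ) →
      |Real.sqrt (sampleMultivariance2 ψ Finset.univ x)
        - Real.sqrt (sampleMultivariance2 ψ Finset.univ y)| < ε :=
  sampleMultivariance_uniformly_equicontinuous_general ρ hmom ψ hψ
end
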